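/- Let R be a commutative ring with identity and let G = Γ(R). Then the following are equivalent: (1) G has at least two vertices and there exists a vertex of G adjacent to every other vertex (G is a refinement of a star graph); (2) G is a tree, i.e., G is nonempty, connected and contains no cycles; (3) G is a star graph, i.e., G has at least two vertices, some vertex is adjacent to every other vertex, and the remaining vertices form an independent set; (4) R is isomorphic to ℤ/2 × F for some field F. -/

import Mathlib

/-!
Two comaximal non-units `x`, `y` are automatically vertices of `Γ(R)`, and so are `x²`, `y²`.
If `Γ(R)` is acyclic, the 4-cycle `x, y, x², y²` must degenerate, so every edge has an
idempotent endpoint; a universal vertex `c` is idempotent as well, since `c` and `c²` are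
comaximal only if `c` is a unit. A nontrivial idempotent splits `R ≅ A × B`, where comaximality
is checked componentwise. In `Γ(A × B)` the triangle `(a, 1), (1 - a, 1), (1, 0)` and the edge
`(u, 0) — (0, v)` (for units `u`, `v`) force `A` and `B` to be fields, one of which has `1` as
its only unit, hence is `ℤ/2`; if `(1, 0)` is universal, the same follows because every vertex
with a non-unit second coordinate must be `(1, 0)`. Conversely, `Γ(ℤ/2 × F)` is the star
centred at `(1, 0)` whose leaves are the `(0, y)`.
-/
universe u

/-- The co-maximal graph `Ω(R)`: vertices are the elements of `R`, with distinct `x`, `y`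
adjacent iff `Rx + Ry = R`. -/
def comaximalGraph (R : Type*) [CommRing R] : SimpleGraph R where
  Adj x y := x ≠ y ∧ Ideal.span {x} ⊔ Ideal.span {y} = ⊤
  symm := ⟨fun _ _ ⟨h1, h2⟩ => ⟨h1.symm, by rwa [sup_comm]⟩⟩
  loopless := ⟨fun _ ⟨h, _⟩ => h rfl⟩

/-- Vertices of `Γ(R)`: the elements of `R \ (U(R) ∪ J(R))`. -/
def GammaVert (R : Type*) [CommRing R] : Type _ :=
  {x : R // ¬IsUnit x ∧ x ∉ (⊥ : Ideal R).jacobson}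

/-- The graph `Γ(R)` induced on `R \ (U(R) ∪ J(R))`: distinct vertices `x`, `y` are
adjacent iff `Rx + Ry = R`. -/
def Gamma (R : Type*) [CommRing R] : SimpleGraph (GammaVert R) where
  Adj a b := a ≠ b ∧ Ideal.span {a.1} ⊔ Ideal.span {b.1} = ⊤
  symm := ⟨fun _ _ ⟨h1, h2⟩ => ⟨h1.symm, by rwa [sup_comm]⟩⟩
  loopless := ⟨fun _ ⟨h, _⟩ => h rfl⟩

/-- Vertices of `Γ_r(R)`: the principal ideals `Rx` for `x ∈ R \ (U(R) ∪ J(R))`. -/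
def GammaRVert (R : Type*) [CommRing R] : Type _ :=
  {I : Ideal R // ∃ x : R, ¬IsUnit x ∧ x ∉ (⊥ : Ideal R).jacobson ∧ I = Ideal.span {x}}

/-- The graph `Γ_r(R)` on `{Rx | x ∈ R \ (U(R) ∪ J(R))}`: distinct vertices `Rx`, `Ry`
are adjacent iff `Rx + Ry = R`. -/
def GammaR (R : Type*) [CommRing R] : SimpleGraph (GammaRVert R) where
  Adj I J := I ≠ J ∧ I.1 ⊔ J.1 = ⊤
  symm := ⟨fun _ _ ⟨h1, h2⟩ => ⟨h1.symm, by rwa [sup_comm]⟩⟩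
  loopless := ⟨fun _ ⟨h, _⟩ => h rfl⟩

/-- A simple graph is a split graph if its vertex set is the disjoint union of a set
inducing a complete graph and an independent set. -/
def IsSplitGraph {V : Type*} (G : SimpleGraph V) : Prop :=
  ∃ K D : Set V, K ∪ D = Set.univ ∧ K ∩ D = ∅ ∧
    (∀ x ∈ K, ∀ y ∈ K, x ≠ y → G.Adj x y) ∧
    (∀ x ∈ D, ∀ y ∈ D, ¬G.Adj x y)

/-- A simple graph is bipartite if its vertex set is the disjoint union of two sets
such that every edge goes between them. -/
def IsBipartiteGraph {V : Type*} (G : SimpleGraph V) : Prop :=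
  ∃ A B : Set V, A ∪ B = Set.univ ∧ A ∩ B = ∅ ∧
    ∀ x y, G.Adj x y → (x ∈ A ∧ y ∈ B) ∨ (x ∈ B ∧ y ∈ A)

/-- A simple graph is complete bipartite if its vertex set is the disjoint union of two
sets such that two vertices are adjacent iff they lie in different parts. -/
def IsCompleteBipartiteGraph {V : Type*} (G : SimpleGraph V) : Prop :=
  ∃ A B : Set V, A ∪ B = Set.univ ∧ A ∩ B = ∅ ∧
    ∀ x y, G.Adj x y ↔ ((x ∈ A ∧ y ∈ B) ∨ (x ∈ B ∧ y ∈ A))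

section Algebra

variable {R S : Type*} [CommRing R] [CommRing S]

lemma not_mem_jacobson_bot_of_isCoprime {x y : R} (hy : ¬IsUnit y) (h : IsCoprime x y) :
    x ∉ (⊥ : Ideal R).jacobson := by
  obtain ⟨a, b, hab⟩ := h
  intro hx
  have : b * y = x * -a + 1 := by linear_combination hab
  exact hy (isUnit_of_mul_isUnit_right (this ▸ Ideal.mem_jacobson_bot.mp hx (-a)))

lemma RingEquiv.map_mem_jacobson_bot_iff (φ : R ≃+* S) {x : R} :
    φ x ∈ (⊥ : Ideal S).jacobson ↔ x ∈ (⊥ : Ideal R).jacobson := by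
  simp only [Ideal.mem_jacobson_bot]
  refine ⟨fun h y => ?_, fun h y => ?_⟩
  · simpa using (h (φ y)).map φ.symm
  · simpa using (h (φ.symm y)).map φ

lemma Prod.isCoprime_iff {A B : Type*} [CommSemiring A] [CommSemiring B] {x y : A × B} :
    IsCoprime x y ↔ IsCoprime x.1 y.1 ∧ IsCoprime x.2 y.2 := by
  refine ⟨fun h => ⟨h.map (RingHom.fst A B), h.map (RingHom.snd A B)⟩, ?_⟩
  rintro ⟨⟨a, a', ha⟩, ⟨b, b', hb⟩⟩
  exact ⟨(a, b), (a', b'), Prod.ext ha hb⟩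

lemma Ideal.Quotient.nontrivial_span_singleton {x : R} (hx : ¬IsUnit x) :
    Nontrivial (R ⧸ Ideal.span {x}) :=
  Ideal.Quotient.nontrivial_iff.mpr (mt Ideal.span_singleton_eq_top.mp hx)

lemma isField_of_forall_not_isUnit_eq_zero [Nontrivial R] (h : ∀ x : R, ¬IsUnit x → x = 0) :
    IsField R :=
  ⟨exists_pair_ne R, mul_comm, fun {x} hx => (not_not.mp (mt (h x) hx)).exists_right_inv⟩

lemma nonempty_ringEquiv_zmod_two [Nontrivial R] (h : ∀ x : R, x = 0 ∨ x = 1) :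
    Nonempty (ZMod 2 ≃+* R) := by
  have hcard : Nat.card R = 2 := Nat.card_eq_two_iff.mpr
    ⟨0, 1, zero_ne_one, Set.eq_univ_of_forall fun x => by simpa using h x⟩
  have : Finite R := Nat.finite_of_card_ne_zero (by omega)
  have := Fintype.ofFinite R
  exact ⟨ZMod.ringEquivOfPrime R Nat.prime_two (Nat.card_eq_fintype_card (α := R) ▸ hcard)⟩

namespace IsIdempotentElem

variable {e : R} (he : IsIdempotentElem e)
include he

lemma not_isUnit_one_sub (he0 : e ≠ 0) : ¬IsUnit (1 - e) := fun hu =>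
  he0 (by linear_combination -(IsIdempotentElem.iff_eq_one_of_isUnit hu).mp he.one_sub)

/-- The Peirce decomposition `R ≃ Re × R(1 - e)`, with the factors written as quotients. -/
noncomputable def ringEquivProdQuotient :
    R ≃+* (R ⧸ Ideal.span {1 - e}) × (R ⧸ Ideal.span {e}) :=
  (AlgEquiv.prodQuotientOfIsIdempotentElem R he.one_sub he (sub_add_cancel 1 e)
    he.one_sub_mul_self).toRingEquiv

lemma ringEquivProdQuotient_apply_self : he.ringEquivProdQuotient e = (1, 0) := by
  refine Prod.ext ?_ ?_
  · change Ideal.Quotient.mk _ e = 1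
    rw [← map_one (Ideal.Quotient.mk _), Ideal.Quotient.eq]
    exact Ideal.mem_span_singleton'.mpr ⟨-1, by ring⟩
  · exact Ideal.Quotient.eq_zero_iff_mem.mpr (Ideal.mem_span_singleton_self e)

end IsIdempotentElem

end Algebra

lemma exists_ringEquiv_zmod_two_prod {R A B : Type u} [CommRing R] [CommRing A] [CommRing B]
    [Nontrivial A] [Nontrivial B] (φ : R ≃+* A × B) (hA0 : ∀ a : A, ¬IsUnit a → a = 0)
    (hA1 : ∀ a : A, IsUnit a → a = 1) (hB : ∀ b : B, ¬IsUnit b → b = 0) :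
    ∃ (F : Type u) (_ : Field F), Nonempty (R ≃+* ZMod 2 × F) := by
  obtain ⟨ψ⟩ := nonempty_ringEquiv_zmod_two fun a => (em (IsUnit a)).symm.imp (hA0 a) (hA1 a)
  let := (isField_of_forall_not_isUnit_eq_zero hB).toField
  exact ⟨B, inferInstance, ⟨φ.trans (ψ.symm.prodCongr (RingEquiv.refl B))⟩⟩

namespace SimpleGraph

variable {V W : Type*} {G : SimpleGraph V} {H : SimpleGraph W} {a b c : V}

lemma IsAcyclic.not_adj_of_adj_of_adj (hG : G.IsAcyclic) (hab : G.Adj a b) (hbc : G.Adj b c) :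
    ¬G.Adj a c := fun hac => by
  have := congrArg (fun p : G.Path a c => p.1.length) <| (hG.subsingleton_path a c).elim
    ⟨.cons hab (.cons hbc .nil), by simp [hab.ne, hbc.ne, hac.ne]⟩
    ⟨.cons hac .nil, by simp [hac.ne]⟩
  simp at this

lemma IsAcyclic.subsingleton_commonNeighbors (hG : G.IsAcyclic) (hac : a ≠ c) :
    (G.commonNeighbors a c).Subsingleton := by
  intro b hb d hd
  rw [mem_commonNeighbors] at hb hd
  have := congrArg (fun p : G.Path a c => p.1.getVert 1) <| (hG.subsingleton_path a c).elim
    ⟨.cons hb.1 (.cons hb.2.symm .nil), by simp [hb.1.ne, hb.2.ne', hac]⟩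
    ⟨.cons hd.1 (.cons hd.2.symm .nil), by simp [hd.1.ne, hd.2.ne', hac]⟩
  simpa using this

lemma eq_starGraph_iff :
    G = starGraph c ↔
      (∀ v, v ≠ c → G.Adj c v) ∧ ∀ u v, u ≠ c → v ≠ c → ¬G.Adj u v := by
  constructor
  · rintro rfl
    exact ⟨fun v hv => starGraph_center_adj hv.symm, by simp +contextual⟩
  · rintro ⟨hc, hind⟩
    ext u v
    rw [starGraph_adj]
    refine ⟨fun h => ⟨h.ne, by by_contra! h'; exact hind u v h'.1 h'.2 h⟩, ?_⟩
    rintro ⟨huv, rfl | rfl⟩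
    · exact hc v huv.symm
    · exact (hc u huv).symm

lemma Iso.eq_starGraph_symm_apply (ψ : G ≃g H) {c : W} (h : H = starGraph c) :
    G = starGraph (ψ.symm c) := by
  subst h
  ext u v
  rw [← ψ.map_adj_iff, starGraph_adj, starGraph_adj, ψ.injective.ne_iff, ψ.eq_symm_apply,
    ψ.eq_symm_apply]

lemma IsUniversal.map_iso (ψ : G ≃g H) (h : G.IsUniversal a) : H.IsUniversal (ψ a) := by
  intro w hw
  rw [← ψ.apply_symm_apply w, ψ.map_adj_iff]
  exact h fun h' => hw (by rw [h', ψ.apply_symm_apply])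

end SimpleGraph

lemma GammaVert.ne_zero {R : Type*} [CommRing R] (a : GammaVert R) : a.1 ≠ 0 :=
  fun h => a.2.2 (h ▸ zero_mem _)

namespace Gamma

open SimpleGraph

section CommRing

variable {R S : Type*} [CommRing R] [CommRing S]

lemma adj_iff {a b : GammaVert R} : (Gamma R).Adj a b ↔ IsCoprime a.1 b.1 := by
  refine ⟨fun h => ?_, fun h => ⟨fun hab => ?_, ?_⟩⟩
  · rw [← Ideal.isCoprime_span_singleton_iff, Ideal.isCoprime_iff_sup_eq]
    exact h.2
  · subst hab
    exact a.2.1 (isCoprime_self.mp h)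
  · rwa [← Ideal.isCoprime_iff_sup_eq, Ideal.isCoprime_span_singleton_iff]

def vertOfIsCoprime {x y : R} (hx : ¬IsUnit x) (hy : ¬IsUnit y) (h : IsCoprime x y) :
    GammaVert R :=
  ⟨x, hx, not_mem_jacobson_bot_of_isCoprime hy h⟩

@[simp]
lemma vertOfIsCoprime_val {x y : R} (hx : ¬IsUnit x) (hy : ¬IsUnit y) (h : IsCoprime x y) :
    (vertOfIsCoprime hx hy h).1 = x :=
  rfl

lemma adj_vertOfIsCoprime {x y : R} (hx : ¬IsUnit x) (hy : ¬IsUnit y) (h : IsCoprime x y) :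
    (Gamma R).Adj (vertOfIsCoprime hx hy h) (vertOfIsCoprime hy hx h.symm) :=
  adj_iff.mpr h

def congr (φ : R ≃+* S) : Gamma R ≃g Gamma S where
  toEquiv := φ.toEquiv.subtypeEquiv fun x => by
    simp [MulEquiv.isUnit_map, φ.map_mem_jacobson_bot_iff]
  map_rel_iff' {a b} := by
    rw [adj_iff, adj_iff]
    change IsCoprime (φ a.1) (φ b.1) ↔ _
    exact ⟨fun h => by simpa using h.map φ.symm.toRingHom, fun h => h.map φ.toRingHom⟩

lemma exists_adj [Nonempty (GammaVert R)] : ∃ a b : GammaVert R, (Gamma R).Adj a b := by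
  obtain ⟨x, hxu, hxj⟩ := ‹Nonempty (GammaVert R)›
  obtain ⟨y, hy⟩ : ∃ y, ¬IsUnit (x * y + 1) := by
    simpa [Ideal.mem_jacobson_bot] using hxj
  exact ⟨_, _, adj_vertOfIsCoprime hxu hy ⟨-y, 1, by ring⟩⟩

/-- Otherwise `a, b, a², b²` would form a 4-cycle. -/
lemma isIdempotentElem_or_of_adj (hG : (Gamma R).IsAcyclic) {a b : GammaVert R}
    (hab : (Gamma R).Adj a b) : IsIdempotentElem a.1 ∨ IsIdempotentElem b.1 := by
  by_contra! h
  have hab' := adj_iff.mp hab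
  have ha2b : IsCoprime (a.1 * a.1) b.1 := hab'.mul_left hab'
  have hab2 : IsCoprime a.1 (b.1 * b.1) := hab'.mul_right hab'
  let a2 := vertOfIsCoprime (mt isUnit_of_mul_isUnit_left a.2.1) b.2.1 ha2b
  let b2 := vertOfIsCoprime (mt isUnit_of_mul_isUnit_left b.2.1) a.2.1 hab2.symm
  have ha2 : a ≠ a2 := fun h' => h.1 (congrArg Subtype.val h').symm
  have hb2 : b = b2 := hG.subsingleton_commonNeighbors ha2 ⟨hab, adj_iff.mpr ha2b⟩
    ⟨adj_iff.mpr hab2, adj_iff.mpr (ha2b.mul_right ha2b)⟩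
  exact h.2 (congrArg Subtype.val hb2).symm

lemma exists_isIdempotentElem (hG : (Gamma R).IsAcyclic) [Nonempty (GammaVert R)] :
    ∃ e : GammaVert R, IsIdempotentElem e.1 := by
  obtain ⟨a, b, hab⟩ := exists_adj (R := R)
  exact (isIdempotentElem_or_of_adj hG hab).elim (⟨a, ·⟩) (⟨b, ·⟩)

lemma isIdempotentElem_of_isUniversal [Nontrivial (GammaVert R)] {c : GammaVert R}
    (hc : (Gamma R).IsUniversal c) : IsIdempotentElem c.1 := by
  obtain ⟨v, hv⟩ := exists_ne c
  have hcv := adj_iff.mp (hc hv.symm)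
  by_contra h
  let c2 := vertOfIsCoprime (mt isUnit_of_mul_isUnit_left c.2.1) v.2.1 (hcv.mul_left hcv)
  have hcc2 : IsCoprime c.1 (c.1 * c.1) :=
    adj_iff.mp (hc (w := c2) fun h' => h (congrArg Subtype.val h').symm)
  exact c.2.1 (isCoprime_self.mp hcc2.of_mul_right_left)

end CommRing

section Prod

variable {A B : Type*} [CommRing A] [CommRing B]

lemma eq_zero_of_not_isUnit_of_isAcyclic [Nontrivial B] (hG : (Gamma (A × B)).IsAcyclic)
    {a : A} (ha : ¬IsUnit a) : a = 0 := by
  have hco : IsCoprime a (1 - a) := ⟨1, 1, by ring⟩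
  have hX : ¬IsUnit ((a, 1) : A × B) := by simp [Prod.isUnit_iff, ha]
  have hZ : ¬IsUnit ((1, 0) : A × B) := by simp [Prod.isUnit_iff]
  have hidem : IsIdempotentElem a := by
    have hW : ¬IsUnit ((1 - a, 0) : A × B) := by simp [Prod.isUnit_iff]
    rcases isIdempotentElem_or_of_adj hG (adj_vertOfIsCoprime hX hW
      (Prod.isCoprime_iff.mpr ⟨hco, isCoprime_one_left⟩)) with h | h
    · exact h.map (RingHom.fst A B)
    · exact IsIdempotentElem.one_sub_iff.mp (h.map (RingHom.fst A B))
  by_contra ha0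
  have hY : ¬IsUnit ((1 - a, 1) : A × B) := by
    simpa [Prod.isUnit_iff] using hidem.not_isUnit_one_sub ha0
  have hXY : IsCoprime ((a, 1) : A × B) (1 - a, 1) :=
    Prod.isCoprime_iff.mpr ⟨hco, isCoprime_one_left⟩
  have hYZ : IsCoprime ((1 - a, 1) : A × B) (1, 0) :=
    Prod.isCoprime_iff.mpr ⟨isCoprime_one_right, isCoprime_one_left⟩
  have hXZ : IsCoprime ((a, 1) : A × B) (1, 0) :=
    Prod.isCoprime_iff.mpr ⟨isCoprime_one_right, isCoprime_one_left⟩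
  exact hG.not_adj_of_adj_of_adj (a := vertOfIsCoprime hX hZ hXZ)
    (b := vertOfIsCoprime hY hZ hYZ) (c := vertOfIsCoprime hZ hX hXZ.symm)
    (adj_iff.mpr hXY) (adj_iff.mpr hYZ) (adj_iff.mpr hXZ)

lemma forall_isUnit_eq_one_or_of_isAcyclic [Nontrivial A] [Nontrivial B]
    (hG : (Gamma (A × B)).IsAcyclic) :
    (∀ u : A, IsUnit u → u = 1) ∨ ∀ v : B, IsUnit v → v = 1 := by
  by_contra! h
  obtain ⟨⟨u, hu, hu1⟩, ⟨v, hv, hv1⟩⟩ := h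
  have hX : ¬IsUnit ((u, 0) : A × B) := by simp [Prod.isUnit_iff]
  have hY : ¬IsUnit ((0, v) : A × B) := by simp [Prod.isUnit_iff]
  have hXY : IsCoprime ((u, 0) : A × B) (0, v) :=
    Prod.isCoprime_iff.mpr ⟨isCoprime_zero_right.mpr hu, isCoprime_zero_left.mpr hv⟩
  rcases isIdempotentElem_or_of_adj hG (adj_vertOfIsCoprime hX hY hXY) with h | h
  · exact hu1 ((IsIdempotentElem.iff_eq_one_of_isUnit hu).mp (h.map (RingHom.fst A B)))
  · exact hv1 ((IsIdempotentElem.iff_eq_one_of_isUnit hv).mp (h.map (RingHom.snd A B)))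

variable {c : GammaVert (A × B)} (hc : (Gamma (A × B)).IsUniversal c) (hc1 : c.1 = (1, 0))
include hc hc1

lemma eq_of_isUniversal_of_not_isUnit_snd {v : GammaVert (A × B)} (hv : ¬IsUnit v.1.2) :
    v = c := by
  by_contra h
  have := (Prod.isCoprime_iff.mp (adj_iff.mp (hc (Ne.symm h)))).2
  rw [hc1] at this
  exact hv (isCoprime_zero_left.mp this)

lemma eq_one_of_isUniversal [Nontrivial A] [Nontrivial B] {u : A} (hu : IsUnit u) : u = 1 := by
  have hX : ¬IsUnit ((u, 0) : A × B) := by simp [Prod.isUnit_iff]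
  have hY : ¬IsUnit ((0, 1) : A × B) := by simp [Prod.isUnit_iff]
  have := eq_of_isUniversal_of_not_isUnit_snd hc hc1 (v := vertOfIsCoprime hX hY
    (Prod.isCoprime_iff.mpr ⟨isCoprime_zero_right.mpr hu, isCoprime_one_right⟩)) not_isUnit_zero
  simpa [hc1] using congrArg (·.1.1) this

lemma eq_zero_of_isUniversal [Nontrivial A] [Nontrivial B] {a : A} (ha : ¬IsUnit a) :
    a = 0 := by
  by_contra ha0
  have hX : ¬IsUnit ((a, 0) : A × B) := by simp [Prod.isUnit_iff, ha]
  have hY : ¬IsUnit ((1 + a, 1) : A × B) := by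
    simp only [Prod.isUnit_iff, isUnit_one, and_true]
    exact fun hu => ha0 (by linear_combination eq_one_of_isUniversal hc hc1 hu)
  have := eq_of_isUniversal_of_not_isUnit_snd hc hc1 (v := vertOfIsCoprime hX hY
    (Prod.isCoprime_iff.mpr ⟨⟨-1, 1, by ring⟩, isCoprime_one_right⟩)) not_isUnit_zero
  have ha1 : a = 1 := by simpa [hc1] using congrArg (·.1.1) this
  exact ha (ha1 ▸ isUnit_one)

lemma eq_zero_snd_of_isUniversal [Nontrivial A] {b : B} (hb : ¬IsUnit b) : b = 0 := by
  have hX : ¬IsUnit ((1, b) : A × B) := by simp [Prod.isUnit_iff, hb]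
  have hY : ¬IsUnit ((0, 1) : A × B) := by simp [Prod.isUnit_iff]
  have := eq_of_isUniversal_of_not_isUnit_snd hc hc1 (v := vertOfIsCoprime hX hY
    (Prod.isCoprime_iff.mpr ⟨isCoprime_one_left, isCoprime_one_right⟩)) hb
  simpa [hc1] using congrArg (·.1.2) this

end Prod

variable {R : Type u} [CommRing R]

theorem exists_ringEquiv_zmod_two_prod_of_isAcyclic [Nonempty (GammaVert R)]
    (hG : (Gamma R).IsAcyclic) :
    ∃ (F : Type u) (_ : Field F), Nonempty (R ≃+* ZMod 2 × F) := by
  obtain ⟨e, he⟩ := exists_isIdempotentElem hG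
  have := Ideal.Quotient.nontrivial_span_singleton (he.not_isUnit_one_sub e.ne_zero)
  have := Ideal.Quotient.nontrivial_span_singleton e.2.1
  let φ := he.ringEquivProdQuotient
  have hG' := (congr φ).isAcyclic_iff.mp hG
  have hG'' := (congr RingEquiv.prodComm).isAcyclic_iff.mp hG'
  have hA0 a := eq_zero_of_not_isUnit_of_isAcyclic hG' (a := a)
  have hB0 b := eq_zero_of_not_isUnit_of_isAcyclic hG'' (a := b)
  rcases forall_isUnit_eq_one_or_of_isAcyclic hG' with hA1 | hB1
  · exact exists_ringEquiv_zmod_two_prod φ hA0 hA1 hB0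
  · exact exists_ringEquiv_zmod_two_prod (φ.trans RingEquiv.prodComm) hB0 hB1 hA0

theorem exists_ringEquiv_zmod_two_prod_of_isUniversal [Nontrivial (GammaVert R)]
    {c : GammaVert R} (hc : (Gamma R).IsUniversal c) :
    ∃ (F : Type u) (_ : Field F), Nonempty (R ≃+* ZMod 2 × F) := by
  have he := isIdempotentElem_of_isUniversal hc
  have := Ideal.Quotient.nontrivial_span_singleton (he.not_isUnit_one_sub c.ne_zero)
  have := Ideal.Quotient.nontrivial_span_singleton c.2.1
  let φ := he.ringEquivProdQuotient
  have hc' := hc.map_iso (congr φ)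
  have hc1 : (congr φ c).1 = (1, 0) := he.ringEquivProdQuotient_apply_self
  exact exists_ringEquiv_zmod_two_prod φ (fun _ => eq_zero_of_isUniversal hc' hc1)
    (fun _ => eq_one_of_isUniversal hc' hc1) (fun _ => eq_zero_snd_of_isUniversal hc' hc1)

lemma exists_eq_starGraph_of_ringEquiv {F : Type*} [Field F] (φ : R ≃+* ZMod 2 × F) :
    ∃ c : GammaVert R, (∃ v, v ≠ c) ∧ Gamma R = starGraph c := by
  have hc : ¬IsUnit ((1, 0) : ZMod 2 × F) := by simp [Prod.isUnit_iff]
  have hv : ¬IsUnit ((0, 1) : ZMod 2 × F) := by simp [Prod.isUnit_iff]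
  have hcv : IsCoprime ((1, 0) : ZMod 2 × F) (0, 1) :=
    Prod.isCoprime_iff.mpr ⟨isCoprime_one_left, isCoprime_one_right⟩
  set c := vertOfIsCoprime hc hv hcv
  have fst_eq_zero (v : GammaVert (ZMod 2 × F)) (hv : v ≠ c) : v.1.1 = 0 := by
    obtain h | h : v.1.1 = 0 ∨ v.1.1 = 1 := by generalize v.1.1 = x; revert x; decide
    · exact h
    refine absurd (Subtype.ext (Prod.ext h ?_)) hv
    by_contra h2
    exact v.2.1 (Prod.isUnit_iff.mpr ⟨h ▸ isUnit_one, isUnit_iff_ne_zero.mpr h2⟩)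
  have hstar : Gamma (ZMod 2 × F) = starGraph c := by
    refine eq_starGraph_iff.mpr ⟨fun v hv => adj_iff.mpr ?_, fun u v hu hv huv => ?_⟩
    · have hv2 : v.1.2 ≠ 0 := fun h => v.ne_zero (Prod.ext (fst_eq_zero v hv) h)
      exact Prod.isCoprime_iff.mpr
        ⟨isCoprime_one_left, isCoprime_zero_left.mpr (isUnit_iff_ne_zero.mpr hv2)⟩
    · have := (Prod.isCoprime_iff.mp (adj_iff.mp huv)).1
      rw [fst_eq_zero u hu, fst_eq_zero v hv, isCoprime_zero_left] at this
      exact not_isUnit_zero this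
  refine ⟨(congr φ).symm c, ⟨(congr φ).symm (vertOfIsCoprime hv hc hcv.symm), ?_⟩,
    (congr φ).eq_starGraph_symm_apply hstar⟩
  exact (congr φ).symm.injective.ne (adj_vertOfIsCoprime hc hv hcv).ne'

end Gamma

/-- Theorem 3.4: for `G = Γ(R)`, the following are equivalent: `G` is a refinement of a
star graph; `G` is a tree; `G` is a star graph; `R ≅ ℤ/2 × F` for some field `F`. -/
theorem gamma_star_tfae (R : Type u) [CommRing R] :
    (((∃ a b : GammaVert R, a ≠ b) ∧
        ∃ c : GammaVert R, ∀ v : GammaVert R, v ≠ c → (Gamma R).Adj c v) ↔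
      ((Gamma R).Connected ∧ (Gamma R).IsAcyclic)) ∧
    (((Gamma R).Connected ∧ (Gamma R).IsAcyclic) ↔
      (∃ c : GammaVert R, (∃ v : GammaVert R, v ≠ c) ∧
        (∀ v : GammaVert R, v ≠ c → (Gamma R).Adj c v) ∧
        ∀ u v : GammaVert R, u ≠ c → v ≠ c → ¬(Gamma R).Adj u v)) ∧
    ((∃ c : GammaVert R, (∃ v : GammaVert R, v ≠ c) ∧
        (∀ v : GammaVert R, v ≠ c → (Gamma R).Adj c v) ∧
        ∀ u v : GammaVert R, u ≠ c → v ≠ c → ¬(Gamma R).Adj u v) ↔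
      (∃ (F : Type u) (_ : Field F), Nonempty (R ≃+* (ZMod 2 × F)))) := by
  suffices key : List.TFAE [_, _, _, _] from ⟨key.out 0 1, key.out 1 2, key.out 2 3⟩
  tfae_have 1 → 4
  | ⟨⟨a, b, hab⟩, c, hc⟩ =>
    have : Nontrivial (GammaVert R) := ⟨a, b, hab⟩
    Gamma.exists_ringEquiv_zmod_two_prod_of_isUniversal fun v hv => hc v hv.symm
  tfae_have 2 → 4
  | ⟨hconn, hacyc⟩ =>
    have := hconn.nonempty
    Gamma.exists_ringEquiv_zmod_two_prod_of_isAcyclic hacyc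
  tfae_have 4 → 3
  | ⟨F, _, ⟨φ⟩⟩ =>
    have ⟨c, hv, hc⟩ := Gamma.exists_eq_starGraph_of_ringEquiv φ
    ⟨c, hv, SimpleGraph.eq_starGraph_iff.mp hc⟩
  tfae_have 3 → 2
  | ⟨c, _, hc⟩ =>
    SimpleGraph.eq_starGraph_iff.mpr hc ▸
      ⟨SimpleGraph.connected_starGraph c, SimpleGraph.isAcyclic_starGraph c⟩
  tfae_have 3 → 1
  | ⟨c, ⟨v, hv⟩, hc, _⟩ => ⟨⟨v, c, hv⟩, c, hc⟩
  tfae_finish
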